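/- Let 𝔄 be a unital C*-algebra with C*-norm ‖·‖, 𝒜 a self-adjoint linear subspace of 𝔄 containing 1, and L : 𝒜 → [0,∞) a seminorm such that L(a) = 0 if and only if a ∈ ℂ·1. Suppose the image of { a ∈ 𝒜 : L(a) ≤ 1 } in the quotient normed space 𝔄/ℂ·1 (with the quotient norm of ‖·‖) is totally bounded. Then the topology induced by ρ_L on S(𝔄) is weaker than the weak* topology: for every state ν and every ε > 0 there is a weak* open set U containing ν such that every state ν' ∈ U satisfies ρ_L(ν',ν) < ε. -/

import Mathlib

/-! Two states agree on `ℂ·1`, so their difference factors through `A ⧸ ℂ·1`, where it is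
Lipschitz with a constant independent of the states (states are bounded, here by `4`, by splitting
an element into four positive parts). An equi-Lipschitz family is uniformly close on a totally
bounded set as soon as it is close on a finite net, and closeness of `ν'` to `ν` at the finitely
many lifts of the net points is a weak* open condition. -/

open scoped ENNReal

noncomputable section

variable {A : Type*} [CStarAlgebra A]

/-- A state on a unital C*-algebra `A`, viewed as an element of the weak* dual: a continuous
linear functional sending the unit to `1` and taking nonnegative real values on positive
elements `star a * a`. -/
def IsState (φ : WeakDual ℂ A) : Prop :=
  φ 1 = 1 ∧ ∀ a : A, 0 ≤ (φ (star a * a)).re ∧ (φ (star a * a)).im = 0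

/-- The semi metric `ρ_L` on the state space of `A` associated with a subset `𝒜 ⊆ A` and a
function `L : A → ℝ`: `ρ_L(μ, ν) = sup { |μ a - ν a| : a ∈ 𝒜, L a ≤ 1 }`, valued in
`[0, ∞]`. -/
def rhoL (𝒜 : Set A) (L : A → ℝ) (μ ν : WeakDual ℂ A) : ℝ≥0∞ :=
  ⨆ a ∈ {a : A | a ∈ 𝒜 ∧ L a ≤ 1}, (‖μ a - ν a‖₊ : ℝ≥0∞)

open NNReal in
theorem TotallyBounded.exists_isOpen_forall_dist_lt {X E F : Type*} [TopologicalSpace X]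
    [PseudoMetricSpace E] [PseudoMetricSpace F] {T : Set E} (hT : TotallyBounded T)
    {P : Set X} {g : X → E → F} {K : ℝ≥0} (hcont : ∀ e, Continuous fun x ↦ g x e)
    (hlip : ∀ x ∈ P, LipschitzWith K (g x)) {x₀ : X} (hx₀ : x₀ ∈ P) {ε : ℝ} (hε : 0 < ε) :
    ∃ U : Set X, IsOpen U ∧ x₀ ∈ U ∧ ∀ x ∈ U, x ∈ P → ∀ e ∈ T, dist (g x e) (g x₀ e) < ε := by
  have hδ : 0 < ε / (3 * (K + 1)) := by positivity
  obtain ⟨t, ht, hcover⟩ := Metric.totallyBounded_iff.mp hT _ hδ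
  refine ⟨⋂ q ∈ t, {x | dist (g x q) (g x₀ q) < ε / 3},
    ht.isOpen_biInter fun q _ ↦ isOpen_lt ((hcont q).dist continuous_const) continuous_const,
    Set.mem_iInter₂.mpr fun q _ ↦ by simpa using hε, fun x hxU hx e he ↦ ?_⟩
  obtain ⟨q, hq, heq⟩ := Set.mem_iUnion₂.mp (hcover he)
  have hnear : K * dist e q < ε / 3 := by
    rw [Metric.mem_ball, lt_div_iff₀ (by positivity)] at heq
    nlinarith [dist_nonneg (x := e) (y := q), K.coe_nonneg]
  calc dist (g x e) (g x₀ e)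
      ≤ dist (g x e) (g x q) + dist (g x q) (g x₀ q) + dist (g x₀ q) (g x₀ e) :=
        dist_triangle4 _ _ _ _
    _ ≤ K * dist e q + dist (g x q) (g x₀ q) + K * dist q e := by
        gcongr
        exacts [(hlip x hx).dist_le_mul e q, (hlip x₀ hx₀).dist_le_mul q e]
    _ < ε / 3 + ε / 3 + ε / 3 := by
        rw [dist_comm q e]
        gcongr
        exact Set.mem_iInter₂.mp hxU q hq
    _ = ε := by ring

open ComplexOrder in
theorem IsState.apply_nonneg [PartialOrder A] [StarOrderedRing A] {φ : WeakDual ℂ A}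
    (hφ : IsState φ) {x : A} (hx : 0 ≤ x) : 0 ≤ φ x := by
  obtain ⟨b, rfl⟩ := CStarAlgebra.nonneg_iff_eq_star_mul_self.mp hx
  exact Complex.nonneg_iff.mpr ⟨(hφ.2 b).1, (hφ.2 b).2.symm⟩

theorem IsState.apply_smul_one {φ : WeakDual ℂ A} (hφ : IsState φ) (c : ℂ) :
    φ (c • (1 : A)) = c := by
  rw [map_smul, hφ.1, smul_eq_mul, mul_one]

theorem IsState.norm_apply_le_of_nonneg [PartialOrder A] [StarOrderedRing A]
    {φ : WeakDual ℂ A} (hφ : IsState φ) {x : A} (hx : 0 ≤ x) : ‖φ x‖ ≤ ‖x‖ := by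
  open ComplexOrder in
  let f : A →ₚ[ℂ] ℂ := .mk₀ (φ : A →L[ℂ] ℂ).toLinearMap fun _ ↦ hφ.apply_nonneg
  have hf : ∀ y, f y = φ y := fun _ ↦ rfl
  simpa [hf, hφ.1] using f.norm_apply_le_of_nonneg x hx

theorem IsState.norm_apply_le {φ : WeakDual ℂ A} (hφ : IsState φ) (a : A) :
    ‖φ a‖ ≤ 4 * ‖a‖ := by
  let := CStarAlgebra.spectralOrder A
  have := CStarAlgebra.spectralOrderedRing A
  obtain ⟨x, hx_nonneg, hx_norm, ha⟩ := CStarAlgebra.exists_sum_four_nonneg a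
  calc ‖φ a‖ ≤ ∑ i, ‖φ (x i)‖ := by
        rw [ha, map_sum]
        refine (norm_sum_le _ _).trans_eq (Finset.sum_congr rfl fun i _ ↦ ?_)
        simp
    _ ≤ ∑ _i : Fin 4, ‖a‖ :=
        Finset.sum_le_sum fun i _ ↦ (hφ.norm_apply_le_of_nonneg (hx_nonneg i)).trans (hx_norm i)
    _ = 4 * ‖a‖ := by simp

theorem IsState.sub_apply_eq_of_sub_mem {μ ν : WeakDual ℂ A} (hμ : IsState μ) (hν : IsState ν)
    {a b : A} (hab : a - b ∈ ℂ ∙ (1 : A)) : μ a - ν a = μ b - ν b := by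
  obtain ⟨c, hc⟩ := Submodule.mem_span_singleton.mp hab
  have hμν : μ (a - b) - ν (a - b) = 0 := by
    rw [← hc, hμ.apply_smul_one, hν.apply_smul_one, sub_self]
  rw [map_sub, map_sub] at hμν
  linear_combination hμν

theorem IsState.norm_sub_apply_le_norm_mk {μ ν : WeakDual ℂ A} (hμ : IsState μ)
    (hν : IsState ν) (a : A) :
    ‖μ a - ν a‖ ≤ 8 * ‖(Submodule.Quotient.mk a : A ⧸ (ℂ ∙ (1 : A)))‖ := by
  rw [← div_le_iff₀' (by norm_num : (0 : ℝ) < 8)]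
  refine QuotientAddGroup.le_norm_iff.mpr fun m hm ↦ ?_
  have hma : m - a ∈ ℂ ∙ (1 : A) := (Submodule.Quotient.eq _).mp hm
  rw [div_le_iff₀' (by norm_num : (0 : ℝ) < 8), ← hμ.sub_apply_eq_of_sub_mem hν hma]
  calc ‖μ m - ν m‖ ≤ ‖μ m‖ + ‖ν m‖ := norm_sub_le _ _
    _ ≤ 4 * ‖m‖ + 4 * ‖m‖ := add_le_add (hμ.norm_apply_le m) (hν.norm_apply_le m)
    _ = 8 * ‖m‖ := by ring

theorem IsState.lipschitzWith_sub_apply_comp {μ ν : WeakDual ℂ A} (hμ : IsState μ)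
    (hν : IsState ν) {b : A ⧸ (ℂ ∙ (1 : A)) → A} (hb : ∀ x, Submodule.Quotient.mk (b x) = x) :
    LipschitzWith 8 fun x ↦ μ (b x) - ν (b x) := by
  refine LipschitzWith.of_dist_le_mul fun x y ↦ ?_
  have h := hμ.norm_sub_apply_le_norm_mk hν (b x - b y)
  rw [Submodule.Quotient.mk_sub, hb, hb, map_sub, map_sub] at h
  rwa [dist_eq_norm, dist_eq_norm, NNReal.coe_ofNat, sub_sub_sub_comm]

theorem rhoL_le_ofReal {𝒜 : Set A} {L : A → ℝ} {μ ν : WeakDual ℂ A} {r : ℝ}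
    (h : ∀ a ∈ 𝒜, L a ≤ 1 → ‖μ a - ν a‖ ≤ r) : rhoL 𝒜 L μ ν ≤ ENNReal.ofReal r :=
  iSup₂_le fun a ha ↦ (ofReal_norm _).symm.trans_le (ENNReal.ofReal_le_ofReal (h a ha.1 ha.2))

theorem rhoL_topology_weaker_of_totallyBounded_general (𝒜 : Submodule ℂ A) (L : A → ℝ)
    (htb : TotallyBounded
      ((Submodule.span ℂ ({1} : Set A)).mkQ '' {a : A | a ∈ 𝒜 ∧ L a ≤ 1})) :
    ∀ ν : WeakDual ℂ A, IsState ν → ∀ ε : ℝ, 0 < ε →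
      ∃ U : Set (WeakDual ℂ A), IsOpen U ∧ ν ∈ U ∧
        ∀ ν' ∈ U, IsState ν' → rhoL (𝒜 : Set A) L ν' ν < ENNReal.ofReal ε := by
  intro ν hν ε hε
  obtain ⟨b, hb⟩ : ∃ b : A ⧸ (ℂ ∙ (1 : A)) → A, ∀ x, Submodule.Quotient.mk (b x) = x :=
    ⟨_, Function.surjInv_eq (Submodule.mkQ_surjective _)⟩
  obtain ⟨U, hU, hνU, hclose⟩ := htb.exists_isOpen_forall_dist_lt
    (g := fun μ x ↦ μ (b x) - ν (b x)) (P := {μ | IsState μ})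
    (fun x ↦ (WeakDual.eval_continuous (b x)).sub continuous_const)
    (fun μ hμ ↦ IsState.lipschitzWith_sub_apply_comp hμ hν hb) hν (half_pos hε)
  refine ⟨U, hU, hνU, fun ν' hν'U hν' ↦ (rhoL_le_ofReal fun a ha hLa ↦ ?_).trans_lt
    ((ENNReal.ofReal_lt_ofReal_iff hε).mpr (half_lt_self hε))⟩
  have hlift : b (Submodule.Quotient.mk a) - a ∈ ℂ ∙ (1 : A) :=
    (Submodule.Quotient.eq _).mp (hb _)
  have h := hclose ν' hν'U hν' (Submodule.Quotient.mk a) ⟨a, ⟨ha, hLa⟩, rfl⟩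
  rw [sub_self, dist_zero_right, hν'.sub_apply_eq_of_sub_mem hν hlift] at h
  exact h.le

/-- Rieffel's criterion.  Let `A` be a unital C*-algebra, `𝒜` a self-adjoint
linear subspace of `A` containing `1`, and `L` a seminorm on `𝒜` with `L a = 0` iff
`a ∈ ℂ·1`.  If the image of `{a ∈ 𝒜 : L a ≤ 1}` in the quotient normed space `A / ℂ·1` is
totally bounded, then the topology induced by `ρ_L` on the state space is weaker than the
weak* topology. -/
theorem rhoL_topology_weaker_of_totallyBounded (𝒜 : Submodule ℂ A)
    (hstar : ∀ a ∈ 𝒜, star a ∈ 𝒜) (hone : (1 : A) ∈ 𝒜) (L : A → ℝ)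
    (hL_nonneg : ∀ a ∈ 𝒜, 0 ≤ L a)
    (hL_add : ∀ a ∈ 𝒜, ∀ b ∈ 𝒜, L (a + b) ≤ L a + L b)
    (hL_smul : ∀ (c : ℂ), ∀ a ∈ 𝒜, L (c • a) = ‖c‖ * L a)
    (hL_zero : ∀ a ∈ 𝒜, (L a = 0 ↔ ∃ c : ℂ, a = c • (1 : A)))
    (htb : TotallyBounded
      ((Submodule.span ℂ ({1} : Set A)).mkQ '' {a : A | a ∈ 𝒜 ∧ L a ≤ 1})) :
    ∀ ν : WeakDual ℂ A, IsState ν → ∀ ε : ℝ, 0 < ε →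
      ∃ U : Set (WeakDual ℂ A), IsOpen U ∧ ν ∈ U ∧
        ∀ ν' ∈ U, IsState ν' → rhoL (𝒜 : Set A) L ν' ν < ENNReal.ofReal ε :=
  rhoL_topology_weaker_of_totallyBounded_general 𝒜 L htb

end
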